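/- arXiv:1902.09844 — 3 statements merged into one kernel-verified Lean document; each statement's English description precedes it below -/
import Mathlib

section
/- Every model of the theory Ω has an infinite universe; that is, if M is a structure interpreting ∈, ⊆, ∪, \ and Pow satisfying the four axioms of Ω, then the domain of M is infinite. -/
/-- A first-order structure for the theory Ω: binary relations ∈ and ⊆,
binary operations ∪ and \, a unary operation Pow, satisfying the four axioms. -/
structure OmegaStructure (M : Type*) where
  mem : M → M → Prop
  subset : M → M → Prop
  union : M → M → M
  sdiff : M → M → M
  pow : M → M
  ax1 : ∀ x y z, mem x (union y z) ↔ mem x y ∨ mem x z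
  ax2 : ∀ x y z, mem x (sdiff y z) ↔ mem x y ∧ ¬ mem x z
  ax3 : ∀ x y, subset x y ↔ ∀ z, mem z x → mem z y
  ax4 : ∀ x y, mem x (pow y) ↔ subset x y

/-!
Starting from the empty set `w \ w` and iterating `Pow` gives stages each of which is a member of
the next and contained in all later ones, while no stage is a member of itself (`x ∉ x` passes to
`Pow x`). Hence the stages are pairwise distinct.
-/

namespace OmegaStructure

variable {M : Type*} (S : OmegaStructure M)

theorem not_mem_sdiff_self (w z : M) : ¬ S.mem z (S.sdiff w w) := fun h =>
  ((S.ax2 z w w).1 h).2 ((S.ax2 z w w).1 h).1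

theorem mem_pow_iff (x y : M) : S.mem x (S.pow y) ↔ ∀ z, S.mem z x → S.mem z y := by
  rw [S.ax4, S.ax3]

theorem mem_pow_self (x : M) : S.mem x (S.pow x) :=
  (S.mem_pow_iff x x).2 fun _ h => h

theorem pow_mono {x y : M} (h : ∀ z, S.mem z x → S.mem z y) (z : M) :
    S.mem z (S.pow x) → S.mem z (S.pow y) := by
  simp only [mem_pow_iff]
  exact fun hz u hu => h u (hz u hu)

-- `Pow x ∈ Pow x` means `Pow x ⊆ x`, and `x ∈ Pow x`.
theorem not_mem_pow_self {x : M} (hx : ¬ S.mem x x) : ¬ S.mem (S.pow x) (S.pow x) := fun h =>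
  hx ((S.mem_pow_iff _ _).1 h x (S.mem_pow_self x))

def powTower (w : M) : ℕ → M
  | 0 => S.sdiff w w
  | n + 1 => S.pow (powTower w n)

theorem powTower_succ (w : M) (n : ℕ) : S.powTower w (n + 1) = S.pow (S.powTower w n) := rfl

theorem powTower_subset_succ (w : M) (n : ℕ) (z : M) :
    S.mem z (S.powTower w n) → S.mem z (S.powTower w (n + 1)) := by
  induction n generalizing z with
  | zero => exact fun h => absurd h (S.not_mem_sdiff_self w z)
  | succ n ih => simpa only [powTower_succ] using S.pow_mono ih z

theorem powTower_mono (w : M) {m n : ℕ} (hmn : m ≤ n) (z : M) :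
    S.mem z (S.powTower w m) → S.mem z (S.powTower w n) := by
  induction n, hmn using Nat.le_induction generalizing z with
  | base => exact id
  | succ n _ ih => exact fun h => S.powTower_subset_succ w n z (ih z h)

theorem not_mem_powTower_self (w : M) (n : ℕ) : ¬ S.mem (S.powTower w n) (S.powTower w n) := by
  induction n with
  | zero => exact S.not_mem_sdiff_self w _
  | succ n ih => simpa only [powTower_succ] using S.not_mem_pow_self ih

theorem powTower_ne_of_lt (w : M) {m n : ℕ} (hmn : m < n) : S.powTower w m ≠ S.powTower w n := by
  intro heq
  have hmem : S.mem (S.powTower w m) (S.powTower w n) :=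
    S.powTower_mono w hmn _ (S.powTower_succ w m ▸ S.mem_pow_self _)
  exact S.not_mem_powTower_self w m (heq ▸ hmem)

theorem powTower_injective (w : M) : Function.Injective (S.powTower w) := by
  intro m n heq
  by_contra hne
  rcases Nat.lt_or_gt_of_ne hne with hlt | hlt
  · exact S.powTower_ne_of_lt w hlt heq
  · exact S.powTower_ne_of_lt w hlt heq.symm

end OmegaStructure

/-- Every model of Ω has an infinite universe. -/
theorem omegaModel_infinite (M : Type*) [Nonempty M] (S : OmegaStructure M) :
    Infinite M :=
  Infinite.of_injective _ (S.powTower_injective (Classical.arbitrary M))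
end

section
/- Let Δ be a transitive set, let W ⊆ Δ, and define the binary relation R on Δ \ W by: (s,t) ∈ R iff there exists u ∈ W with u ∈ s and t ∈ u. Suppose Δ \ W satisfies Trans² with respect to W, i.e., for all z ∈ Δ \ W, u ∈ z with u ∈ W, and v ∈ u, we have v ∈ Δ \ W. Then for every d ∈ Δ \ W and every C ⊆ Δ \ W: d ⊆ (Δ \ W) ∪ {u ∈ W | u ⊆ C} if and only if for all t, (d,t) ∈ R implies t ∈ C. -/
namespace ZFSet

theorem mem_sdiff_union_sep_iff {x Δ W C : ZFSet} (hx : x ∈ Δ) :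
    x ∈ (Δ \ W) ∪ W.sep (· ⊆ C) ↔ (x ∈ W → x ⊆ C) := by
  by_cases hxW : x ∈ W <;> simp [mem_union, mem_sdiff, mem_sep, hx, hxW]

theorem subset_sdiff_union_sep_iff {d Δ W C : ZFSet} (hd : d ⊆ Δ) :
    d ⊆ (Δ \ W) ∪ W.sep (· ⊆ C) ↔ ∀ u ∈ d, u ∈ W → u ⊆ C :=
  subset_def.trans <| forall₂_congr fun _ hu => mem_sdiff_union_sep_iff (hd hu)

end ZFSet

theorem encoding_forall_role_general (Δ W : ZFSet) (hΔ : Δ.IsTransitive)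
    (d : ZFSet) (hd : d ∈ Δ)
    (C : ZFSet) :
    d ⊆ (Δ \ W) ∪ W.sep (fun u => u ⊆ C) ↔
      ∀ t : ZFSet, (∃ u, u ∈ W ∧ u ∈ d ∧ t ∈ u) → t ∈ C := by
  rw [ZFSet.subset_sdiff_union_sep_iff (hΔ.subset_of_mem hd)]
  exact ⟨fun h t ⟨u, huW, hud, htu⟩ => h u hud huW htu,
    fun h u hud huW t htu => h t ⟨u, huW, hud, htu⟩⟩

/-- Semantic core of the encoding of ∀R.C into the roleless fragment LC^Ω:
with roles simulated by connector elements in W, d satisfies the encoded concept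
Pow(¬U ⊔ Pow(C)) exactly when all its R-successors satisfy C. -/
theorem encoding_forall_role (Δ W : ZFSet) (hΔ : Δ.IsTransitive) (hW : W ⊆ Δ)
    (htrans2 : ∀ z ∈ Δ, z ∉ W → ∀ u ∈ z, u ∈ W → ∀ v ∈ u, v ∈ Δ ∧ v ∉ W)
    (d : ZFSet) (hd : d ∈ Δ) (hdW : d ∉ W)
    (C : ZFSet) (hC : C ⊆ Δ \ W) :
    d ⊆ (Δ \ W) ∪ W.sep (fun u => u ⊆ C) ↔
      ∀ t : ZFSet, (∃ u, u ∈ W ∧ u ∈ d ∧ t ∈ u) → t ∈ C :=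
  encoding_forall_role_general Δ W hΔ d hd C
end

section
/- Let Δ be a transitive set in a model of Ω, let e be the relation (x,y) ∈ e iff y ∈ x on Δ, and for each concept C interpreted as Cᴵ ⊆ Δ define the ALCOI translation where Pow(D) becomes ∀e.D. Then interpreting ∀e.D as {x ∈ Δ | ∀y ((x,y) ∈ e → y ∈ Dᴵ)} and Pow(D) as Pow(Dᴵ) ∩ Δ yields identical sets, and this identity is preserved under all Boolean concept constructors; hence the interpretations of any concept and of its translation agree on all elements of Δ. -/
/-- LCConcepts of the roleless fragment LC^Ω: atoms, ⊤, ⊥, ⊓, ⊔, ¬, \, Pow. -/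
inductive LCConcept (α : Type*) where
  | atom (a : α)
  | top
  | bot
  | neg (C : LCConcept α)
  | inter (C D : LCConcept α)
  | union (C D : LCConcept α)
  | sdiff (C D : LCConcept α)
  | pow (C : LCConcept α)

/-- Set-theoretic interpretation: Pow(C) is interpreted as Pow(Cᴵ) ∩ Δ. -/
def interpS {α : Type*} (Δ : ZFSet) (v : α → ZFSet) : LCConcept α → ZFSet
  | .atom a => v a
  | .top => Δ
  | .bot => ∅
  | .neg C => Δ \ interpS Δ v C
  | .inter C D => interpS Δ v C ∩ interpS Δ v D
  | .union C D => interpS Δ v C ∪ interpS Δ v D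
  | .sdiff C D => interpS Δ v C \ interpS Δ v D
  | .pow C => ZFSet.powerset (interpS Δ v C) ∩ Δ

/-- Modal interpretation of the translation: the translated subconcept ∀e.Dᵀ of
Pow(D) is interpreted as {x ∈ Δ | ∀ y, (x,y) ∈ e → y ∈ Dᵀᴵ}, where (x,y) ∈ e
iff y ∈ x; the translation commutes with all other constructors. -/
def interpT {α : Type*} (Δ : ZFSet) (v : α → ZFSet) : LCConcept α → ZFSet
  | .atom a => v a
  | .top => Δ
  | .bot => ∅
  | .neg C => Δ \ interpT Δ v C
  | .inter C D => interpT Δ v C ∩ interpT Δ v D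
  | .union C D => interpT Δ v C ∪ interpT Δ v D
  | .sdiff C D => interpT Δ v C \ interpT Δ v D
  | .pow C => Δ.sep (fun x => ∀ y, y ∈ x → y ∈ interpT Δ v C)

theorem ZFSet.IsTransitive.mem_powerset_inter_iff_mem_sep {Δ A B x : ZFSet}
    (hΔ : Δ.IsTransitive) (hAB : ∀ y ∈ Δ, y ∈ A ↔ y ∈ B) (hx : x ∈ Δ) :
    x ∈ A.powerset ∩ Δ ↔ x ∈ Δ.sep (fun x => ∀ y ∈ x, y ∈ B) := by
  rw [ZFSet.mem_inter, ZFSet.mem_powerset, ZFSet.mem_sep, and_iff_left hx, and_iff_right hx]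
  exact forall₂_congr fun y hy => hAB y (hΔ.mem_trans hy hx)

theorem interp_translation_agree_general {α : Type*} (Δ : ZFSet) (hΔ : Δ.IsTransitive)
    (v : α → ZFSet) :
    ∀ C : LCConcept α, ∀ x ∈ Δ, (x ∈ interpS Δ v C ↔ x ∈ interpT Δ v C) := by
  intro C
  induction C with
  | atom | top | bot => exact fun _ _ => Iff.rfl
  | neg C ih =>
    intro x hx
    simp only [interpS, interpT, ZFSet.mem_sdiff, ih x hx]
  | inter C D ihC ihD =>
    intro x hx
    simp only [interpS, interpT, ZFSet.mem_inter, ihC x hx, ihD x hx]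
  | union C D ihC ihD =>
    intro x hx
    simp only [interpS, interpT, ZFSet.mem_union, ihC x hx, ihD x hx]
  | sdiff C D ihC ihD =>
    intro x hx
    simp only [interpS, interpT, ZFSet.mem_sdiff, ihC x hx, ihD x hx]
  | pow C ih => exact fun x hx => hΔ.mem_powerset_inter_iff_mem_sep ih hx

/-- Over a transitive domain Δ, the interpretation of any concept and of its
ALCOI translation (where Pow becomes ∀e) agree on all elements of Δ. -/
theorem interp_translation_agree {α : Type*} (Δ : ZFSet) (hΔ : Δ.IsTransitive)
    (v : α → ZFSet) (hv : ∀ a, v a ⊆ Δ) :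
    ∀ C : LCConcept α, ∀ x ∈ Δ, (x ∈ interpS Δ v C ↔ x ∈ interpT Δ v C) :=
  interp_translation_agree_general Δ hΔ v
end
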